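/- Let 𝒱 be the v-transform with fulcrum δ ∈ (0,1) and generator Ψ, where Ψ is differentiable on (0,1) with strictly positive derivative, and let Δ be its conditional down probability. Then ∫₀¹ Δ(v) dv = δ; equivalently, if V is uniformly distributed on [0,1] then E[Δ(V)] = δ. -/

import Mathlib

/-!
On `[0, δ]` the v-transform is continuous and strictly decreasing from `1` to `0`, so `𝒱⁻¹` is
the inverse of this left branch. Substituting `v = 𝒱 u` turns `∫₀¹ Δ(v) dv` into
`∫₀^δ |𝒱′(u)| · (-1 / 𝒱′(u)) du = ∫₀^δ 1 du = δ`.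
The expectation is the same integral, pushed forward along `V`.
-/

open Set MeasureTheory

/-- The v-transform with fulcrum `δ` and generator `Ψ` (with inverse `Ψinv`):
`𝒱(u) = (1-u) - (1-δ)·Ψ(u/δ)` for `u ≤ δ` and `𝒱(u) = u - δ·Ψinv((1-u)/(1-δ))`
for `u > δ`. -/
noncomputable def vt (δ : ℝ) (Ψ Ψinv : ℝ → ℝ) (u : ℝ) : ℝ :=
  if u ≤ δ then (1 - u) - (1 - δ) * Ψ (u / δ)
  else u - δ * Ψinv ((1 - u) / (1 - δ))

/-- Left-branch inverse `𝒱⁻¹(v) = inf {u ∈ [0,1] : 𝒱 u = v}`. -/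
noncomputable def vtInv (V : ℝ → ℝ) (v : ℝ) : ℝ :=
  sInf {u | u ∈ Set.Icc (0:ℝ) 1 ∧ V u = v}

/-- Conditional down probability `Δ(v) = -1 / 𝒱′(𝒱⁻¹(v))`. -/
noncomputable def vtDelta (V : ℝ → ℝ) (v : ℝ) : ℝ :=
  -1 / deriv V (vtInv V v)

/-- Stochastic inversion function of a v-transform:
`𝒱⁻¹ₛ(v,w) = 𝒱⁻¹(v)` if `w ≤ Δ(v)`, and `v + 𝒱⁻¹(v)` otherwise. -/
noncomputable def vtSInv (V : ℝ → ℝ) (v w : ℝ) : ℝ :=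
  if w ≤ vtDelta V v then vtInv V v else v + vtInv V v

structure IsDescendingBranch (W : ℝ → ℝ) (a : ℝ) : Prop where
  continuousOn : ContinuousOn W (Icc 0 a)
  deriv_neg : ∀ u ∈ Ioo 0 a, deriv W u < 0
  map_zero : W 0 = 1
  map_right : W a = 0

namespace IsDescendingBranch

variable {W : ℝ → ℝ} {a : ℝ}

theorem strictAntiOn (hW : IsDescendingBranch W a) : StrictAntiOn W (Icc 0 a) :=
  strictAntiOn_of_deriv_neg (convex_Icc 0 a) hW.continuousOn
    (by rw [interior_Icc]; exact hW.deriv_neg)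

theorem vtInv_apply (hW : IsDescendingBranch W a) (ha1 : a ≤ 1) {u : ℝ} (hu : u ∈ Icc 0 a) :
    vtInv W (W u) = u := by
  refine IsLeast.csInf_eq ⟨⟨⟨hu.1, hu.2.trans ha1⟩, rfl⟩, ?_⟩
  rintro u' ⟨hu', heq⟩
  by_cases h : u' ≤ a
  · exact (hW.strictAntiOn.injOn ⟨hu'.1, h⟩ hu heq).ge
  · linarith [hu.2, not_le.1 h]

theorem vtInv_mem_Icc_and_apply (hW : IsDescendingBranch W a) (ha : 0 ≤ a) (ha1 : a ≤ 1)
    {v : ℝ} (hv : v ∈ Icc 0 1) : vtInv W v ∈ Icc 0 a ∧ W (vtInv W v) = v := by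
  have hivt := intermediate_value_Icc' ha hW.continuousOn
  rw [hW.map_zero, hW.map_right] at hivt
  obtain ⟨u, hu, rfl⟩ := hivt hv
  rw [hW.vtInv_apply ha1 hu]
  exact ⟨hu, rfl⟩

theorem antitoneOn_vtInv (hW : IsDescendingBranch W a) (ha : 0 ≤ a) (ha1 : a ≤ 1) :
    AntitoneOn (vtInv W) (Icc 0 1) := by
  intro v₁ hv₁ v₂ hv₂ hle
  obtain ⟨hm₁, hW₁⟩ := hW.vtInv_mem_Icc_and_apply ha ha1 hv₁
  obtain ⟨hm₂, hW₂⟩ := hW.vtInv_mem_Icc_and_apply ha ha1 hv₂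
  refine not_lt.1 fun hlt => ?_
  have := hW.strictAntiOn hm₁ hm₂ hlt
  linarith

theorem aestronglyMeasurable_vtDelta (hW : IsDescendingBranch W a) (ha : 0 ≤ a) (ha1 : a ≤ 1) :
    AEStronglyMeasurable (vtDelta W) (volume.restrict (Icc 0 1)) :=
  (aemeasurable_const.div ((measurable_deriv W).comp_aemeasurable
    (aemeasurable_restrict_of_antitoneOn measurableSet_Icc
      (hW.antitoneOn_vtInv ha ha1)))).aestronglyMeasurable

theorem image_Ioo (hW : IsDescendingBranch W a) (ha : 0 ≤ a) : W '' Ioo 0 a = Ioo 0 1 := by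
  refine (image_subset_iff.2 fun u hu => ?_).antisymm ?_
  · have h₀ := hW.strictAntiOn (left_mem_Icc.2 ha) (Ioo_subset_Icc_self hu) hu.1
    have h₁ := hW.strictAntiOn (Ioo_subset_Icc_self hu) (right_mem_Icc.2 ha) hu.2
    exact ⟨hW.map_right ▸ h₁, hW.map_zero ▸ h₀⟩
  · have hivt := intermediate_value_Ioo' ha hW.continuousOn
    rwa [hW.map_zero, hW.map_right] at hivt

theorem setIntegral_vtDelta (hW : IsDescendingBranch W a) (ha : 0 ≤ a) (ha1 : a ≤ 1) :
    ∫ v in Icc 0 1, vtDelta W v = a := by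
  have hderiv : ∀ u ∈ Ioo 0 a, HasDerivWithinAt W (deriv W u) (Ioo 0 a) u := fun u hu =>
    (differentiableAt_of_deriv_ne_zero (hW.deriv_neg u hu).ne).hasDerivAt.hasDerivWithinAt
  -- the Jacobian `|𝒱′ u|` cancels `Δ (𝒱 u) = -1 / 𝒱′ u`
  have hone : ∀ u ∈ Ioo 0 a, |deriv W u| • vtDelta W (W u) = 1 := by
    intro u hu
    rw [vtDelta, hW.vtInv_apply ha1 (Ioo_subset_Icc_self hu), smul_eq_mul,
      abs_of_neg (hW.deriv_neg u hu)]
    field_simp [(hW.deriv_neg u hu).ne]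
  rw [integral_Icc_eq_integral_Ioo, ← hW.image_Ioo ha,
    integral_image_eq_integral_abs_deriv_smul measurableSet_Ioo hderiv
      (hW.strictAntiOn.injOn.mono Ioo_subset_Icc_self),
    setIntegral_congr_fun measurableSet_Ioo hone]
  simp [ha]

end IsDescendingBranch

section VTransform

variable {δ : ℝ} {Ψ Ψinv : ℝ → ℝ}

theorem vt_of_le {u : ℝ} (hu : u ≤ δ) : vt δ Ψ Ψinv u = 1 - u - (1 - δ) * Ψ (u / δ) :=
  if_pos hu

theorem vt_zero (hδ : 0 ≤ δ) (hΨ0 : Ψ 0 = 0) : vt δ Ψ Ψinv 0 = 1 := by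
  simp [vt_of_le hδ, hΨ0]

theorem vt_self (hδ : δ ≠ 0) (hΨ1 : Ψ 1 = 1) : vt δ Ψ Ψinv δ = 0 := by
  simp [vt_of_le le_rfl, div_self hδ, hΨ1]

theorem continuousOn_vt (hδ : 0 < δ) (hΨc : ContinuousOn Ψ (Icc 0 1)) :
    ContinuousOn (vt δ Ψ Ψinv) (Icc 0 δ) := by
  have hmaps : MapsTo (· / δ) (Icc 0 δ) (Icc 0 1) := fun u hu =>
    ⟨div_nonneg hu.1 hδ.le, (div_le_one hδ).2 hu.2⟩
  refine ContinuousOn.congr ?_ fun u hu => vt_of_le hu.2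
  exact (continuousOn_const.sub continuousOn_id).sub
    (continuousOn_const.mul (hΨc.comp (continuousOn_id.div_const δ) hmaps))

theorem hasDerivAt_vt {u : ℝ} (hu : u < δ) (hΨ : DifferentiableAt ℝ Ψ (u / δ)) :
    HasDerivAt (vt δ Ψ Ψinv) (-1 - (1 - δ) * (deriv Ψ (u / δ) * (1 / δ))) u := by
  have hleft : HasDerivAt (fun x => 1 - x - (1 - δ) * Ψ (x / δ))
      (-1 - (1 - δ) * (deriv Ψ (u / δ) * (1 / δ))) u :=
    ((hasDerivAt_id u).const_sub 1).sub
      ((hΨ.hasDerivAt.comp u ((hasDerivAt_id u).div_const δ)).const_mul (1 - δ))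
  refine hleft.congr_of_eventuallyEq ?_
  filter_upwards [Iio_mem_nhds hu] with x hx using vt_of_le hx.le

theorem deriv_vt_neg (hδ : δ ∈ Ioo 0 1)
    (hΨd : ∀ x ∈ Ioo (0 : ℝ) 1, DifferentiableAt ℝ Ψ x ∧ 0 < deriv Ψ x) {u : ℝ}
    (hu : u ∈ Ioo 0 δ) : deriv (vt δ Ψ Ψinv) u < 0 := by
  obtain ⟨hdiff, hpos⟩ := hΨd (u / δ) ⟨div_pos hu.1 hδ.1, (div_lt_one hδ.1).2 hu.2⟩
  rw [(hasDerivAt_vt hu.2 hdiff).deriv]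
  have : 0 < (1 - δ) * (deriv Ψ (u / δ) * (1 / δ)) :=
    mul_pos (by linarith [hδ.2]) (mul_pos hpos (one_div_pos.2 hδ.1))
  linarith

end VTransform

theorem stmt_3_general
    (δ : ℝ) (hδ : δ ∈ Set.Ioo (0:ℝ) 1) (Ψ Ψinv : ℝ → ℝ)
    (hΨc : ContinuousOn Ψ (Set.Icc 0 1))
    (hΨ0 : Ψ 0 = 0) (hΨ1 : Ψ 1 = 1)
    (hΨd : ∀ x ∈ Set.Ioo (0:ℝ) 1, DifferentiableAt ℝ Ψ x ∧ 0 < deriv Ψ x)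
    :
    (∫ v in Set.Icc (0:ℝ) 1, vtDelta (vt δ Ψ Ψinv) v) = δ ∧
    ∀ (Ω : Type) [MeasurableSpace Ω] (P : Measure Ω), IsProbabilityMeasure P →
      ∀ V : Ω → ℝ, Measurable V →
        Measure.map V P = volume.restrict (Set.Icc (0:ℝ) 1) →
        ∫ ω, vtDelta (vt δ Ψ Ψinv) (V ω) ∂P = δ := by
  have hW : IsDescendingBranch (vt δ Ψ Ψinv) δ :=
    ⟨continuousOn_vt hδ.1 hΨc, fun _ => deriv_vt_neg hδ hΨd, vt_zero hδ.1.le hΨ0,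
      vt_self hδ.1.ne' hΨ1⟩
  have hint := hW.setIntegral_vtDelta hδ.1.le hδ.2.le
  refine ⟨hint, fun Ω _ P _ V hV hmap => ?_⟩
  have hmeas := hW.aestronglyMeasurable_vtDelta hδ.1.le hδ.2.le
  rw [← integral_map hV.aemeasurable (hmap ▸ hmeas), hmap, hint]

theorem stmt_3
    (δ : ℝ) (hδ : δ ∈ Set.Ioo (0:ℝ) 1) (Ψ Ψinv : ℝ → ℝ)
    (hΨc : ContinuousOn Ψ (Set.Icc 0 1)) (hΨm : StrictMonoOn Ψ (Set.Icc 0 1))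
    (hΨ0 : Ψ 0 = 0) (hΨ1 : Ψ 1 = 1)
    (hΨinv : ∀ x ∈ Set.Icc (0:ℝ) 1, Ψinv (Ψ x) = x ∧ Ψ (Ψinv x) = x)
    (hΨd : ∀ x ∈ Set.Ioo (0:ℝ) 1, DifferentiableAt ℝ Ψ x ∧ 0 < deriv Ψ x)
    :
    (∫ v in Set.Icc (0:ℝ) 1, vtDelta (vt δ Ψ Ψinv) v) = δ ∧
    ∀ (Ω : Type) [MeasurableSpace Ω] (P : Measure Ω), IsProbabilityMeasure P →
      ∀ V : Ω → ℝ, Measurable V →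
        Measure.map V P = volume.restrict (Set.Icc (0:ℝ) 1) →
        ∫ ω, vtDelta (vt δ Ψ Ψinv) (V ω) ∂P = δ :=
  stmt_3_general δ hδ Ψ Ψinv hΨc hΨ0 hΨ1 hΨd
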